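/- Let ρ : so(3) → gl(V) be a finite-dimensional real representation such that for every ξ ∈ V*, any three elements of the set {ξ, ρ*_{X₁}ξ, ρ*_{X₂}ξ, ρ*_{X₃}ξ} are linearly dependent (where X₁,X₂,X₃ is the standard basis of so(3) and ρ* the dual representation). If moreover for every ξ ∈ V* the orbit tangent space {ρ*_X ξ : X ∈ so(3)} intersects ℝξ only in 0, then ρ is the trivial representation. -/

import Mathlib

open Module

attribute [local instance 100] LieRing.ofAssociativeRing

/-- The dual representation `ρ*_X ξ = -ξ ∘ ρ_X`. -/
noncomputable def dualRep {L V : Type*} [LieRing L] [LieAlgebra ℝ L]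
    [AddCommGroup V] [Module ℝ V] (ρ : L →ₗ⁅ℝ⁆ Module.End ℝ V) (X : L)
    (ξ : Module.Dual ℝ V) : Module.Dual ℝ V :=
  -((ρ X).dualMap ξ)

section Aux

variable {L V : Type*} [LieRing L] [LieAlgebra ℝ L]
    [AddCommGroup V] [Module ℝ V] (ρ : L →ₗ⁅ℝ⁆ Module.End ℝ V)

lemma dualRep_apply (X : L) (ξ : Module.Dual ℝ V) (v : V) :
    dualRep ρ X ξ v = -(ξ ((ρ X) v)) := rfl

lemma dualRep_add (X Y : L) (ξ : Module.Dual ℝ V) :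
    dualRep ρ (X + Y) ξ = dualRep ρ X ξ + dualRep ρ Y ξ := by
  ext v; simp [dualRep_apply, map_add]; ring

lemma dualRep_smul (a : ℝ) (X : L) (ξ : Module.Dual ℝ V) :
    dualRep ρ (a • X) ξ = a • dualRep ρ X ξ := by
  ext v; simp [dualRep_apply, map_smul]

lemma dualRep_sub (X Y : L) (ξ : Module.Dual ℝ V) :
    dualRep ρ (X - Y) ξ = dualRep ρ X ξ - dualRep ρ Y ξ := by
  ext v; simp [dualRep_apply, map_sub]; ring

lemma dualRep_zero_xi (X : L) : dualRep ρ X (0 : Module.Dual ℝ V) = 0 := by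
  ext v; simp [dualRep_apply]

lemma dualRep_lie (X Y : L) (ξ : Module.Dual ℝ V)
    (hX : dualRep ρ X ξ = 0) (hY : dualRep ρ Y ξ = 0) :
    dualRep ρ ⁅X, Y⁆ ξ = 0 := by
  have hX' : ∀ v, ξ ((ρ X) v) = 0 := by
    intro v
    have := DFunLike.congr_fun hX v
    rw [dualRep_apply] at this
    simpa [neg_eq_zero] using this
  have hY' : ∀ v, ξ ((ρ Y) v) = 0 := by
    intro v
    have := DFunLike.congr_fun hY v
    rw [dualRep_apply] at this
    simpa [neg_eq_zero] using this
  ext v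
  rw [dualRep_apply, ρ.map_lie]
  simp [LieRing.of_associative_ring_bracket, Module.End.mul_apply, hX', hY']

/-- Key computation: if `Bi, Bj, Bk` satisfy the cyclic `so(3)` bracket relations and
`ρ*_{Bi} ξ, ρ*_{Bj} ξ` are multiples of `ρ*_{Bk} ξ`, and the latter vanish on the
kernel elements, then `ρ*_{Bk} ξ = 0`. -/
lemma aux_k (Bi Bj Bk : L)
    (hij : ⁅Bi, Bj⁆ = Bk) (hjk : ⁅Bj, Bk⁆ = Bi) (hki : ⁅Bk, Bi⁆ = Bj)
    (ξ : Module.Dual ℝ V) (c d : ℝ)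
    (hc : dualRep ρ Bi ξ = c • dualRep ρ Bk ξ)
    (hd : dualRep ρ Bj ξ = d • dualRep ρ Bk ξ) :
    dualRep ρ Bk ξ = 0 := by
  have hYi : dualRep ρ (Bi - c • Bk) ξ = 0 := by
    rw [dualRep_sub, dualRep_smul, hc, sub_self]
  have hYj : dualRep ρ (Bj - d • Bk) ξ = 0 := by
    rw [dualRep_sub, dualRep_smul, hd, sub_self]
  have hZ0 : dualRep ρ ⁅Bi - c • Bk, Bj - d • Bk⁆ ξ = 0 :=
    dualRep_lie ρ _ _ ξ hYi hYj
  have hik : ⁅Bi, Bk⁆ = -Bj := by rw [← hki, ← lie_skew]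
  have hkj : ⁅Bk, Bj⁆ = -Bi := by rw [← hjk, ← lie_skew]
  have hbr : ⁅Bi - c • Bk, Bj - d • Bk⁆ = c • Bi + d • Bj + Bk := by
    rw [lie_sub, sub_lie, sub_lie, lie_smul, lie_smul, smul_lie, smul_lie,
      lie_self, smul_zero, hij, hik, hkj]
    module
  rw [hbr, dualRep_add, dualRep_add, dualRep_smul, dualRep_smul, hc, hd,
    smul_smul, smul_smul] at hZ0
  have hsum : (c * c + d * d + 1) • dualRep ρ Bk ξ = 0 := by
    rw [add_smul, add_smul, one_smul]; exact hZ0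
  have hpos : c * c + d * d + 1 ≠ 0 := by
    have : (0:ℝ) < c * c + d * d + 1 := by nlinarith [mul_self_nonneg c, mul_self_nonneg d]
    exact this.ne'
  exact (smul_eq_zero.mp hsum).resolve_left hpos

end Aux

/-- let `ρ` be a finite-dimensional representation of `so(3)`
(basis `X₁,X₂,X₃` with the standard brackets) such that for every `ξ ∈ V*` any three
elements of `{ξ, ρ*_{X₁}ξ, ρ*_{X₂}ξ, ρ*_{X₃}ξ}` are linearly dependent, and such that
the orbit tangent space `{ρ*_X ξ : X ∈ so(3)}` meets `ℝξ` only in `0`.  Then `ρ` is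
trivial. -/
theorem so3_rep_trivial (L V : Type*) [LieRing L] [LieAlgebra ℝ L]
    [AddCommGroup V] [Module ℝ V] [FiniteDimensional ℝ V]
    (b : Basis (Fin 3) ℝ L)
    (h12 : ⁅b 0, b 1⁆ = b 2) (h23 : ⁅b 1, b 2⁆ = b 0) (h31 : ⁅b 2, b 0⁆ = b 1)
    (ρ : L →ₗ⁅ℝ⁆ Module.End ℝ V)
    (hdep : ∀ ξ : Module.Dual ℝ V, ∀ η₁ η₂ η₃ : Module.Dual ℝ V,
      η₁ ∈ ({ξ, dualRep ρ (b 0) ξ, dualRep ρ (b 1) ξ, dualRep ρ (b 2) ξ} :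
        Set (Module.Dual ℝ V)) →
      η₂ ∈ ({ξ, dualRep ρ (b 0) ξ, dualRep ρ (b 1) ξ, dualRep ρ (b 2) ξ} :
        Set (Module.Dual ℝ V)) →
      η₃ ∈ ({ξ, dualRep ρ (b 0) ξ, dualRep ρ (b 1) ξ, dualRep ρ (b 2) ξ} :
        Set (Module.Dual ℝ V)) →
      ¬ LinearIndependent ℝ ![η₁, η₂, η₃])
    (horb : ∀ ξ : Module.Dual ℝ V, ∀ X : L, ∀ c : ℝ,
      dualRep ρ X ξ = c • ξ → dualRep ρ X ξ = 0) :
    ∀ X : L, ρ X = 0 := by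
  -- Main step: all dual representation operators of the basis kill every ξ.
  have key : ∀ ξ : Module.Dual ℝ V, ∀ i : Fin 3, dualRep ρ (b i) ξ = 0 := by
    intro ξ
    by_contra hcon
    push_neg at hcon
    obtain ⟨k, hk⟩ := hcon
    have mem : ∀ m : Fin 3, dualRep ρ (b m) ξ ∈
        ({ξ, dualRep ρ (b 0) ξ, dualRep ρ (b 1) ξ, dualRep ρ (b 2) ξ} :
          Set (Module.Dual ℝ V)) := by
      intro m
      fin_cases m <;> simp [Set.mem_insert_iff]
    -- every basis dual operator value is a multiple of the k-th
    have getc : ∀ i : Fin 3, ∃ c : ℝ,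
        dualRep ρ (b i) ξ = c • dualRep ρ (b k) ξ := by
      intro i
      have hd := hdep ξ ξ (dualRep ρ (b i) ξ) (dualRep ρ (b k) ξ)
        (Set.mem_insert _ _) (mem i) (mem k)
      rw [Fintype.not_linearIndependent_iff] at hd
      obtain ⟨g, hsum, m, hm⟩ := hd
      rw [Fin.sum_univ_three] at hsum
      simp only [Matrix.cons_val_zero, Matrix.cons_val_one, Matrix.head_cons,
        Matrix.cons_val_two, Matrix.tail_cons] at hsum
      by_cases hg0 : g 0 = 0
      · rw [hg0, zero_smul, zero_add] at hsum
        by_cases hg1 : g 1 = 0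
        · -- then g 2 ≠ 0 and η k = 0, contradiction
          rw [hg1, zero_smul, zero_add] at hsum
          have hg2 : g 2 ≠ 0 := by
            fin_cases m
            · exact absurd hg0 hm
            · exact absurd hg1 hm
            · exact hm
          exact absurd ((smul_eq_zero.mp hsum).resolve_left hg2) hk
        · refine ⟨-(g 2) / g 1, ?_⟩
          have h' : g 1 • dualRep ρ (b i) ξ = -(g 2 • dualRep ρ (b k) ξ) :=
            eq_neg_of_add_eq_zero_left hsum
          apply smul_right_injective (Module.Dual ℝ V) hg1
          show g 1 • dualRep ρ (b i) ξ
            = g 1 • ((-(g 2) / g 1) • dualRep ρ (b k) ξ)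
          rw [h']
          have e : g 1 * (-(g 2) / g 1) = -(g 2) := by field_simp
          rw [smul_smul, e, neg_smul]
      · -- ξ lies in the orbit tangent space, so ξ = 0, contradiction
        have hξ : ξ = (-(g 1) / g 0) • dualRep ρ (b i) ξ
            + (-(g 2) / g 0) • dualRep ρ (b k) ξ := by
          have h' : g 0 • ξ = -(g 1 • dualRep ρ (b i) ξ)
              - g 2 • dualRep ρ (b k) ξ := by
            rw [← sub_eq_zero, ← hsum]; abel
          apply smul_right_injective (Module.Dual ℝ V) hg0
          show g 0 • ξ = g 0 • ((-(g 1) / g 0) • dualRep ρ (b i) ξ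
            + (-(g 2) / g 0) • dualRep ρ (b k) ξ)
          rw [h', smul_add, smul_smul, smul_smul]
          have e1 : g 0 * (-(g 1) / g 0) = -(g 1) := by field_simp
          have e2 : g 0 * (-(g 2) / g 0) = -(g 2) := by field_simp
          rw [e1, e2]; module
        have hX : dualRep ρ ((-(g 1) / g 0) • b i + (-(g 2) / g 0) • b k) ξ
            = (1 : ℝ) • ξ := by
          rw [dualRep_add, dualRep_smul, dualRep_smul, one_smul, ← hξ]
        have h0 := horb ξ _ 1 hX
        rw [hX, one_smul] at h0
        subst h0
        exact absurd (dualRep_zero_xi ρ (b k)) hk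
    obtain ⟨c₀, hc₀⟩ := getc 0
    obtain ⟨c₁, hc₁⟩ := getc 1
    obtain ⟨c₂, hc₂⟩ := getc 2
    fin_cases k
    · exact hk (aux_k ρ (b 1) (b 2) (b 0) h23 h31 h12 ξ c₁ c₂ hc₁ hc₂)
    · exact hk (aux_k ρ (b 2) (b 0) (b 1) h31 h12 h23 ξ c₂ c₀ hc₂ hc₀)
    · exact hk (aux_k ρ (b 0) (b 1) (b 2) h12 h23 h31 ξ c₀ c₁ hc₀ hc₁)
  -- basis operators vanish
  have hbasis : ∀ i : Fin 3, ρ (b i) = 0 := by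
    intro i
    ext v
    rw [LinearMap.zero_apply]
    rw [← Module.forall_dual_apply_eq_zero_iff ℝ]
    intro φ
    have := DFunLike.congr_fun (key φ i) v
    rw [dualRep_apply] at this
    simpa [neg_eq_zero] using this
  -- conclude for all X
  intro X
  have hX : X = ∑ i, b.repr X i • b i := (b.sum_repr X).symm
  show ρ.toLinearMap X = 0
  rw [hX, map_sum]
  simp only [map_smul, LieHom.coe_toLinearMap, hbasis, smul_zero]
  simp
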